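/- Let s(α) := ∫₀¹ (α/(8πt)) Σ_{k∈ℤ} ( ∫_{2k−1}^{2k+1} e^{−αx²/(8t)} dx )² dt for α > 0. Then lim_{α → ∞} s(α) = 1. -/

import Mathlib

/-!
With `c = α / (8t)` and `a_k = ∫_{2k-1}^{2k+1} e^{-c x²} dx`, the blocks tile the line, so
`∑ a_k = √(π/c)`, and the central block is the largest one, `a_0 = √(π/c) erf √c`. Hence
`a_0² ≤ ∑ a_k² ≤ a_0 ∑ a_k`, that is `erf(√c)² ≤ (c/π) ∑ a_k² ≤ erf √c`. As `α → ∞` both bounds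
tend to `1` for every `t ∈ (0, 1]`, so by dominated convergence their integrals over `t` tend to `1`
and squeeze `s(α)`.
-/

open MeasureTheory Filter

/-- The error function `erf x = (2/√π) ∫_0^x e^{-s²} ds`. -/
noncomputable def erf (x : ℝ) : ℝ :=
  (2 / Real.sqrt Real.pi) * ∫ s in (0:ℝ)..x, Real.exp (-s ^ 2)

/-- `c(α) = ∫_0^1 erf(√(α/(8t))) dt`. -/
noncomputable def cFun (α : ℝ) : ℝ :=
  ∫ t in (0:ℝ)..1, erf (Real.sqrt (α / (8 * t)))

/-- `s(α) = ∫_0^1 (α/(8πt)) Σ_{k∈ℤ} (∫_{2k-1}^{2k+1} e^{-αx²/(8t)} dx)² dt`. -/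
noncomputable def sFun (α : ℝ) : ℝ :=
  ∫ t in (0:ℝ)..1, (α / (8 * Real.pi * t)) *
    ∑' k : ℤ, (∫ x in (2 * (k : ℝ) - 1)..(2 * (k : ℝ) + 1),
      Real.exp (-(α * x ^ 2) / (8 * t))) ^ 2

open Real Set Topology Function

lemma integral_Ioi_exp_neg_sq : ∫ s in Ioi (0:ℝ), exp (-s ^ 2) = √π / 2 := by
  simpa using integral_gaussian_Ioi 1

lemma integrableOn_Ioi_exp_neg_sq : IntegrableOn (fun s : ℝ => exp (-s ^ 2)) (Ioi 0) := by
  simpa using (integrable_exp_neg_mul_sq one_pos).integrableOn (s := Ioi 0)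

lemma erf_nonneg {x : ℝ} (hx : 0 ≤ x) : 0 ≤ erf x :=
  mul_nonneg (by positivity) (intervalIntegral.integral_nonneg hx fun s _ => (exp_pos _).le)

lemma erf_le_one {x : ℝ} (hx : 0 ≤ x) : erf x ≤ 1 := by
  have h : ∫ s in (0:ℝ)..x, exp (-s ^ 2) ≤ √π / 2 := by
    rw [intervalIntegral.integral_of_le hx, ← integral_Ioi_exp_neg_sq]
    exact setIntegral_mono_set integrableOn_Ioi_exp_neg_sq
      (Eventually.of_forall fun s => (exp_pos _).le) Ioc_subset_Ioi_self.eventuallyLE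
  have hπ : 0 < √π := sqrt_pos.2 pi_pos
  calc erf x ≤ 2 / √π * (√π / 2) := mul_le_mul_of_nonneg_left h (by positivity)
    _ = 1 := by field_simp

lemma abs_erf_le_one {x : ℝ} (hx : 0 ≤ x) : |erf x| ≤ 1 :=
  abs_le.2 ⟨by linarith [erf_nonneg hx], erf_le_one hx⟩

lemma continuous_erf : Continuous erf :=
  continuous_const.mul (intervalIntegral.continuous_primitive
    (fun _ _ => (by fun_prop : Continuous fun s : ℝ => exp (-s ^ 2)).intervalIntegrable _ _) 0)

lemma tendsto_erf_atTop : Tendsto erf atTop (𝓝 1) := by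
  have h := (intervalIntegral_tendsto_integral_Ioi 0 integrableOn_Ioi_exp_neg_sq
    tendsto_id).const_mul (2 / √π)
  have hπ : 0 < √π := sqrt_pos.2 pi_pos
  rwa [integral_Ioi_exp_neg_sq, show 2 / √π * (√π / 2) = 1 by field_simp] at h

lemma integral_neg_one_one_exp_neg_mul_sq {c : ℝ} (hc : 0 < c) :
    ∫ x in (-1:ℝ)..1, exp (-(c * x ^ 2)) = √(π / c) * erf √c := by
  have hsc : 0 < √c := sqrt_pos.2 hc
  have hf : Continuous fun u : ℝ => exp (-u ^ 2) := by fun_prop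
  have hsub : ∀ x : ℝ, exp (-(c * x ^ 2)) = exp (-(√c * x) ^ 2) := fun x => by
    rw [mul_pow, sq_sqrt hc.le]
  have heven : ∫ u in -√c..0, exp (-u ^ 2) = ∫ u in (0:ℝ)..√c, exp (-u ^ 2) := by
    have h := (intervalIntegral.integral_comp_neg (a := 0) (b := √c) fun u => exp (-u ^ 2)).symm
    simp only [neg_zero, even_two, Even.neg_pow] at h
    exact h
  simp_rw [hsub]
  rw [intervalIntegral.integral_comp_mul_left (fun u => exp (-u ^ 2)) hsc.ne', smul_eq_mul,
    mul_neg_one, mul_one, ← intervalIntegral.integral_add_adjacent_intervals (b := 0)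
      (hf.intervalIntegrable _ _) (hf.intervalIntegrable _ _), heven, erf, sqrt_div pi_pos.le]
  have hπ : 0 < √π := sqrt_pos.2 pi_pos
  field_simp
  ring

noncomputable def gaussianBlock (c : ℝ) (k : ℤ) : ℝ :=
  ∫ x in (2 * (k : ℝ) - 1)..(2 * (k : ℝ) + 1), exp (-(c * x ^ 2))

noncomputable def gaussianBlockEnergy (c : ℝ) : ℝ :=
  c / π * ∑' k : ℤ, gaussianBlock c k ^ 2

lemma sFun_eq_integral_gaussianBlockEnergy (α : ℝ) :
    sFun α = ∫ t in (0:ℝ)..1, gaussianBlockEnergy (α / (8 * t)) := by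
  unfold sFun gaussianBlockEnergy gaussianBlock
  congr 1 with t
  rw [div_div, mul_right_comm]
  congr 3 with k
  congr 2 with x
  ring_nf

lemma gaussianBlock_nonneg (c : ℝ) (k : ℤ) : 0 ≤ gaussianBlock c k :=
  intervalIntegral.integral_nonneg (by linarith) fun _ _ => (exp_pos _).le

lemma iUnion_Ioc_two_mul_int : ⋃ k : ℤ, Ioc (2 * (k : ℝ) - 1) (2 * k + 1) = univ := by
  refine eq_univ_of_forall fun x => mem_iUnion.2 ⟨⌈(x - 1) / 2⌉, ?_, ?_⟩
  · linarith [Int.ceil_lt_add_one ((x - 1) / 2)]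
  · linarith [Int.le_ceil ((x - 1) / 2)]

lemma pairwise_disjoint_Ioc_two_mul_int :
    Pairwise (Disjoint on fun k : ℤ => Ioc (2 * (k : ℝ) - 1) (2 * k + 1)) := by
  intro i j hij
  rw [onFun, Ioc_disjoint_Ioc]
  rcases hij.lt_or_gt with h | h
  · have : (i : ℝ) + 1 ≤ j := by exact_mod_cast h
    exact (min_le_left _ _).trans ((by linarith : 2 * (i : ℝ) + 1 ≤ 2 * j - 1).trans
      (le_max_right _ _))
  · have : (j : ℝ) + 1 ≤ i := by exact_mod_cast h
    exact (min_le_right _ _).trans ((by linarith : 2 * (j : ℝ) + 1 ≤ 2 * i - 1).trans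
      (le_max_left _ _))

lemma hasSum_gaussianBlock {c : ℝ} (hc : 0 < c) : HasSum (gaussianBlock c) √(π / c) := by
  have hint : Integrable fun x : ℝ => exp (-(c * x ^ 2)) := by
    simpa only [neg_mul] using integrable_exp_neg_mul_sq hc
  have h := hasSum_integral_iUnion (fun _ => measurableSet_Ioc)
    pairwise_disjoint_Ioc_two_mul_int hint.integrableOn
  rw [iUnion_Ioc_two_mul_int, setIntegral_univ] at h
  have hblock : gaussianBlock c =
      fun k : ℤ => ∫ x in Ioc (2 * (k : ℝ) - 1) (2 * k + 1), exp (-(c * x ^ 2)) :=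
    funext fun k => intervalIntegral.integral_of_le (by linarith)
  have htotal : ∫ x, exp (-(c * x ^ 2)) = √(π / c) := by
    simpa only [neg_mul] using integral_gaussian c
  rwa [hblock, ← htotal]

lemma sq_le_add_two_mul_int_sq {x : ℝ} (hx : |x| ≤ 1) (k : ℤ) : x ^ 2 ≤ (x + 2 * k) ^ 2 := by
  obtain ⟨hx₁, hx₂⟩ := abs_le.1 hx
  rcases lt_trichotomy k 0 with hk | rfl | hk
  · have : (k : ℝ) ≤ -1 := by exact_mod_cast Int.le_sub_one_of_lt hk
    nlinarith
  · simp
  · have : (1 : ℝ) ≤ k := by exact_mod_cast hk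
    nlinarith

lemma gaussianBlock_le_gaussianBlock_zero {c : ℝ} (hc : 0 ≤ c) (k : ℤ) :
    gaussianBlock c k ≤ gaussianBlock c 0 := by
  have hshift : gaussianBlock c k = ∫ x in (-1:ℝ)..1, exp (-(c * (x + 2 * k) ^ 2)) := by
    rw [intervalIntegral.integral_comp_add_right (fun x => exp (-(c * x ^ 2))), gaussianBlock]
    ring_nf
  have hzero : gaussianBlock c 0 = ∫ x in (-1:ℝ)..1, exp (-(c * x ^ 2)) := by
    norm_num [gaussianBlock]
  rw [hshift, hzero]
  refine intervalIntegral.integral_mono_on (by norm_num) (Continuous.intervalIntegrable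
    (by fun_prop) _ _) (Continuous.intervalIntegrable (by fun_prop) _ _) fun x hx => ?_
  have := sq_le_add_two_mul_int_sq (abs_le.2 hx) k
  gcongr

lemma gaussianBlock_zero {c : ℝ} (hc : 0 < c) : gaussianBlock c 0 = √(π / c) * erf √c := by
  norm_num [gaussianBlock, integral_neg_one_one_exp_neg_mul_sq hc]

lemma summable_sq_of_nonneg_of_le {ι : Type*} {a : ι → ℝ} {M : ℝ} (h0 : ∀ i, 0 ≤ a i)
    (hM : ∀ i, a i ≤ M) (ha : Summable a) : Summable fun i => a i ^ 2 :=
  (ha.mul_left M).of_nonneg_of_le (fun i => sq_nonneg _) fun i => by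
    rw [sq]; exact mul_le_mul_of_nonneg_right (hM i) (h0 i)

lemma tsum_sq_le_mul_tsum {ι : Type*} {a : ι → ℝ} {M : ℝ} (h0 : ∀ i, 0 ≤ a i)
    (hM : ∀ i, a i ≤ M) (ha : Summable a) : ∑' i, a i ^ 2 ≤ M * ∑' i, a i := by
  rw [← tsum_mul_left]
  exact (summable_sq_of_nonneg_of_le h0 hM ha).tsum_le_tsum
    (fun i => by rw [sq]; exact mul_le_mul_of_nonneg_right (hM i) (h0 i)) (ha.mul_left M)

lemma erf_sqrt_sq_le_gaussianBlockEnergy {c : ℝ} (hc : 0 < c) :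
    erf √c ^ 2 ≤ gaussianBlockEnergy c := by
  have hsq := summable_sq_of_nonneg_of_le (gaussianBlock_nonneg c)
    (gaussianBlock_le_gaussianBlock_zero hc.le) (hasSum_gaussianBlock hc).summable
  calc erf √c ^ 2 = c / π * gaussianBlock c 0 ^ 2 := by
        rw [gaussianBlock_zero hc, mul_pow, sq_sqrt (by positivity)]
        field_simp
    _ ≤ gaussianBlockEnergy c :=
        mul_le_mul_of_nonneg_left (hsq.le_tsum 0 fun k _ => sq_nonneg _) (by positivity)

lemma gaussianBlockEnergy_le_erf_sqrt {c : ℝ} (hc : 0 < c) : gaussianBlockEnergy c ≤ erf √c := by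
  have hS := hasSum_gaussianBlock hc
  calc gaussianBlockEnergy c ≤ c / π * (gaussianBlock c 0 * √(π / c)) := by
        rw [← hS.tsum_eq]
        exact mul_le_mul_of_nonneg_left (tsum_sq_le_mul_tsum (gaussianBlock_nonneg c)
          (gaussianBlock_le_gaussianBlock_zero hc.le) hS.summable) (by positivity)
    _ = erf √c := by
        rw [gaussianBlock_zero hc, mul_right_comm, mul_self_sqrt (by positivity)]
        field_simp

lemma abs_gaussianBlockEnergy_le_one {c : ℝ} (hc : 0 < c) : |gaussianBlockEnergy c| ≤ 1 :=
  abs_le.2 ⟨by nlinarith [erf_sqrt_sq_le_gaussianBlockEnergy hc],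
    (gaussianBlockEnergy_le_erf_sqrt hc).trans (erf_le_one (sqrt_nonneg c))⟩

lemma continuous_gaussianBlock (k : ℤ) : Continuous fun c => gaussianBlock c k :=
  intervalIntegral.continuous_parametric_intervalIntegral_of_continuous' (by fun_prop) _ _

lemma measurable_gaussianBlockEnergy : Measurable gaussianBlockEnergy :=
  (measurable_id.div_const π).mul
    (Measurable.tsum fun k => ((continuous_gaussianBlock k).pow 2).measurable)

section RescaledIntegral

variable {φ : ℝ → ℝ} {κ C : ℝ}

lemma intervalIntegrable_comp_div_mul {α : ℝ} (hα : 0 < α) (hκ : 0 < κ) (hφm : Measurable φ)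
    (hφC : ∀ c, 0 < c → |φ c| ≤ C) :
    IntervalIntegrable (fun t => φ (α / (κ * t))) volume 0 1 := by
  refine (intervalIntegrable_const (c := C)).mono_fun'
    (hφm.comp (measurable_const.div (measurable_const.mul measurable_id))).aestronglyMeasurable ?_
  rw [uIoc_of_le zero_le_one]
  filter_upwards [ae_restrict_mem measurableSet_Ioc] with t ht
  exact hφC _ (by have := ht.1; positivity)

lemma tendsto_intervalIntegral_comp_div_mul {L : ℝ} (hκ : 0 < κ) (hφm : Measurable φ)
    (hφC : ∀ c, 0 < c → |φ c| ≤ C) (hφ : Tendsto φ atTop (𝓝 L)) :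
    Tendsto (fun α => ∫ t in (0:ℝ)..1, φ (α / (κ * t))) atTop (𝓝 L) := by
  have h := intervalIntegral.tendsto_integral_filter_of_dominated_convergence (μ := volume)
    (F := fun α t => φ (α / (κ * t))) (f := fun _ => L) (fun _ => C)
    (Eventually.of_forall fun α =>
      (hφm.comp (measurable_const.div (measurable_const.mul measurable_id))).aestronglyMeasurable)
    (by
      filter_upwards [eventually_gt_atTop 0] with α hα
      refine Eventually.of_forall fun t ht => hφC _ ?_
      rw [uIoc_of_le zero_le_one] at ht
      have := ht.1
      positivity)
    intervalIntegrable_const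
    (Eventually.of_forall fun t ht => by
      rw [uIoc_of_le zero_le_one] at ht
      exact hφ.comp (tendsto_id.atTop_div_const (mul_pos hκ ht.1)))
  simpa using h

end RescaledIntegral

/-- `s(α) → 1` as `α → ∞`. -/
theorem sFun_tendsto_one : Tendsto sFun atTop (nhds 1) := by
  have h8 : (0:ℝ) < 8 := by norm_num
  have herf : Tendsto (fun c => erf √c) atTop (𝓝 1) := tendsto_erf_atTop.comp tendsto_sqrt_atTop
  have herfm : Measurable fun c => erf √c := (continuous_erf.comp continuous_sqrt).measurable
  have herf_abs : ∀ c, 0 < c → |erf √c| ≤ 1 := fun c _ => abs_erf_le_one (sqrt_nonneg c)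
  have herf_sq_abs : ∀ c, 0 < c → |erf √c ^ 2| ≤ 1 := fun c hc => by
    rw [abs_pow]; exact pow_le_one₀ (abs_nonneg _) (herf_abs c hc)
  have hlower := tendsto_intervalIntegral_comp_div_mul h8 (herfm.pow_const 2) herf_sq_abs
    (by simpa using herf.pow 2)
  have hupper := tendsto_intervalIntegral_comp_div_mul h8 herfm herf_abs herf
  rw [funext sFun_eq_integral_gaussianBlockEnergy]
  have hE := fun α (hα : (0:ℝ) < α) => intervalIntegrable_comp_div_mul hα h8
    measurable_gaussianBlockEnergy fun c hc => abs_gaussianBlockEnergy_le_one hc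
  refine tendsto_of_tendsto_of_tendsto_of_le_of_le' hlower hupper ?_ ?_ <;>
    filter_upwards [eventually_gt_atTop 0] with α hα
  · exact intervalIntegral.integral_mono_on_of_le_Ioo zero_le_one
      (intervalIntegrable_comp_div_mul hα h8 (herfm.pow_const 2) herf_sq_abs) (hE α hα)
      fun t ht => erf_sqrt_sq_le_gaussianBlockEnergy (by have := ht.1; positivity)
  · exact intervalIntegral.integral_mono_on_of_le_Ioo zero_le_one (hE α hα)
      (intervalIntegrable_comp_div_mul hα h8 herfm herf_abs)
      fun t ht => gaussianBlockEnergy_le_erf_sqrt (by have := ht.1; positivity)
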